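/- arXiv:0808.0505 — 4 statements merged into one kernel-verified Lean document; each statement's English description precedes it below -/
import Mathlib

section
/- For every real α with 1/2 < α < 1, the supremum over P ∈ ℝ² of the integral ∫_{ℝ²} dκ 1/((1+|κ|²)(1+|P-κ|²)^{(1-α)/2}) is finite. -/
/-!
With `A = 1 + |κ|²`, `B = 1 + |P - κ|²` and `β = (1 - α)/2 > 0` one has `A B^β ≥ min(A, B)^(1+β)`,
so the integrand is at most `A^(-(1+β)) + B^(-(1+β))`. As `2(1 + β) > 2`, both terms are integrable
on `ℝ²`, and by translation invariance their integrals do not depend on `P`.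
-/

open MeasureTheory

/-- squared Euclidean norm on ℝ² -/
def nsq (x : ℝ × ℝ) : ℝ := x.1^2 + x.2^2

lemma nsq_nonneg (x : ℝ × ℝ) : 0 ≤ nsq x := by
  unfold nsq; positivity

lemma one_add_nsq_pos (x : ℝ × ℝ) : 0 < 1 + nsq x := by
  linarith [nsq_nonneg x]

-- `ℝ × ℝ` carries the sup norm, which is dominated by the Euclidean one.
lemma sq_norm_le_nsq (x : ℝ × ℝ) : ‖x‖ ^ 2 ≤ nsq x := by
  rw [Prod.norm_def, Real.norm_eq_abs, Real.norm_eq_abs]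
  unfold nsq
  rcases max_cases |x.1| |x.2| with ⟨h, _⟩ | ⟨h, _⟩ <;> rw [h] <;>
    nlinarith [sq_abs x.1, sq_abs x.2]

lemma integrable_one_add_nsq_rpow_neg {s : ℝ} (hs : 1 < s) :
    Integrable (fun x : ℝ × ℝ => (1 + nsq x) ^ (-s)) := by
  have hdim : (Module.finrank ℝ (ℝ × ℝ) : ℝ) < 2 * s := by
    simp [Module.finrank_prod]; linarith
  refine (integrable_rpow_neg_one_add_norm_sq hdim).mono' ?_ (.of_forall fun x => ?_)
  · have : Continuous nsq := by unfold nsq; fun_prop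
    exact ((continuous_const.add this).rpow_const
      fun x => .inl (one_add_nsq_pos x).ne').aestronglyMeasurable
  · rw [Real.norm_of_nonneg (Real.rpow_nonneg (one_add_nsq_pos x).le _),
      show -(2 * s) / 2 = -s by ring]
    exact Real.rpow_le_rpow_of_nonpos (by positivity)
      (by linarith [sq_norm_le_nsq x]) (by linarith)

lemma one_div_mul_rpow_le_rpow_neg_add_rpow_neg {a b β : ℝ} (ha : 0 < a) (hb : 0 < b)
    (hβ : 0 ≤ β) : 1 / (a * b ^ β) ≤ a ^ (-(1 + β)) + b ^ (-(1 + β)) := by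
  have key : ∀ c, 0 < c → c ^ (1 + β) ≤ a * b ^ β → 1 / (a * b ^ β) ≤ c ^ (-(1 + β)) :=
    fun c hc h => by
      rw [Real.rpow_neg hc.le, ← one_div]
      exact one_div_le_one_div_of_le (by positivity) h
  rcases le_total a b with h | h
  · have := key a ha (by rw [Real.rpow_add ha, Real.rpow_one]; gcongr)
    linarith [Real.rpow_nonneg hb.le (-(1 + β))]
  · have := key b hb (by rw [Real.rpow_add hb, Real.rpow_one]; gcongr)
    linarith [Real.rpow_nonneg ha.le (-(1 + β))]

theorem stmt0_general (α : ℝ) (h2 : α < 1) :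
    ∃ C : ℝ, ∀ P : ℝ × ℝ,
      (∫ κ : ℝ × ℝ, 1 / ((1 + nsq κ) * (1 + nsq (P - κ)) ^ ((1 - α) / 2))) ≤ C := by
  set β : ℝ := (1 - α) / 2
  have hβ : 0 < β := by simp only [β]; linarith
  set g : ℝ × ℝ → ℝ := fun x => (1 + nsq x) ^ (-(1 + β))
  have hg : Integrable g := integrable_one_add_nsq_rpow_neg (by linarith)
  refine ⟨2 * ∫ x, g x, fun P => ?_⟩
  calc (∫ κ : ℝ × ℝ, 1 / ((1 + nsq κ) * (1 + nsq (P - κ)) ^ β))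
      ≤ ∫ κ, (g κ + g (P - κ)) :=
        integral_mono_of_nonneg
          (.of_forall fun κ => by
            have := one_add_nsq_pos κ; have := one_add_nsq_pos (P - κ); positivity)
          (hg.add (hg.comp_sub_left P))
          (.of_forall fun κ => one_div_mul_rpow_le_rpow_neg_add_rpow_neg
            (one_add_nsq_pos κ) (one_add_nsq_pos (P - κ)) hβ.le)
    _ = 2 * ∫ x, g x := by
        rw [integral_add hg (hg.comp_sub_left P), integral_sub_left_eq_self g volume P]
        ring

theorem stmt0 (α : ℝ) (h1 : 1/2 < α) (h2 : α < 1) :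
    ∃ C : ℝ, ∀ P : ℝ × ℝ,
      (∫ κ : ℝ × ℝ, 1 / ((1 + nsq κ) * (1 + nsq (P - κ)) ^ ((1 - α) / 2))) ≤ C :=
  stmt0_general α h2
end

section
/- For every α with 0 < α < 1 there is a constant C (depending on α) such that for all p, κ ∈ ℝ², ∫_{ℝ²} dq 1/((1+|p-q|²)^{1-α} (1+|q+κ|²)) ≤ C/(1+|p+κ|²)^{(1-α)/2}. -/
open MeasureTheory

lemma nsq_neg (x : ℝ × ℝ) : nsq (-x) = nsq x := by
  simp [nsq]

lemma nsq_add_le (u v : ℝ × ℝ) : nsq (u + v) ≤ 2 * nsq u + 2 * nsq v := by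
  simp only [nsq, Prod.fst_add, Prod.snd_add]
  nlinarith [sq_nonneg (u.1 - v.1), sq_nonneg (u.2 - v.2)]

lemma continuous_nsq : Continuous nsq := by
  unfold nsq
  fun_prop

/-- Integrability of `(1 + nsq q)^(-c)` on ℝ² for `c > 1`. -/
lemma integrable_base {c : ℝ} (hc : 1 < c) :
    Integrable (fun q : ℝ × ℝ => (1 + nsq q) ^ (-c)) := by
  have h2 : ((Module.finrank ℝ (ℝ × ℝ)) : ℝ) < 2 * c := by
    rw [Module.finrank_prod, Module.finrank_self]
    push_cast; linarith
  have hI := integrable_rpow_neg_one_add_norm_sq (E := ℝ × ℝ) (μ := volume) h2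
  have heq : -(2*c)/2 = -c := by ring
  rw [heq] at hI
  refine hI.mono' ?_ (Filter.Eventually.of_forall fun q => ?_)
  · apply Continuous.aestronglyMeasurable
    apply Continuous.rpow_const (by exact continuous_const.add continuous_nsq)
    intro x
    left
    have := nsq_nonneg x
    positivity
  · have h0 : (0:ℝ) ≤ (1 + nsq q) ^ (-c) := Real.rpow_nonneg (by have := nsq_nonneg q; positivity) _
    rw [Real.norm_of_nonneg h0]
    have hnorm : ‖q‖^2 ≤ nsq q := by
      have hq : ‖q‖ = |q.1| ⊔ |q.2| := rfl
      rw [hq, nsq]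
      rcases le_total (|q.1|) (|q.2|) with h | h
      · rw [sup_eq_right.2 h, sq_abs]; nlinarith [sq_nonneg q.1]
      · rw [sup_eq_left.2 h, sq_abs]; nlinarith [sq_nonneg q.2]
    apply Real.rpow_le_rpow_of_nonpos (by positivity) (by linarith) (by linarith)

/-- decreasing in the base for negative exponents -/
lemma rpow_anti {x y z : ℝ} (hx : 0 < x) (hxy : x ≤ y) (hz : 0 ≤ z) :
    y ^ (-z) ≤ x ^ (-z) :=
  Real.rpow_le_rpow_of_nonpos hx hxy (by linarith)

/-- The key pointwise inequality, as a statement about real numbers. -/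
lemma pointwise (α : ℝ) (h1 : 0 < α) (h2 : α < 1) {A B D : ℝ}
    (hA : 0 ≤ A) (hB : 0 ≤ B) (hD0 : 0 ≤ D) (hD : D ≤ 2*A + 2*B) :
    1 / ((1+A) ^ (1-α) * (1+B)) ≤
      (4:ℝ) ^ ((1-α)/2) * (1+D) ^ (-((1-α)/2)) *
        ((1+A) ^ (-((3-α)/2)) + (1+B) ^ (-((3-α)/2))) := by
  set t : ℝ := (1-α)/2 with ht_def
  set c : ℝ := (3-α)/2 with hc_def
  have ht : 0 < t := by rw [ht_def]; linarith
  have ha : (0:ℝ) < 1 + A := by linarith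
  have hb : (0:ℝ) < 1 + B := by linarith
  have hd : (0:ℝ) < 1 + D := by linarith
  -- generic step: if (1+D) ≤ 4*(1+X) then (1+X)^(-t) ≤ 4^t * (1+D)^(-t)
  have step : ∀ X : ℝ, 0 < 1 + X → 1 + D ≤ 4 * (1+X) →
      (1+X) ^ (-t) ≤ (4:ℝ) ^ t * (1+D) ^ (-t) := by
    intro X hx hle
    have h4 : (1+D) ^ t ≤ (4:ℝ)^t * (1+X)^t := by
      rw [← Real.mul_rpow (by norm_num) hx.le]
      exact Real.rpow_le_rpow hd.le hle ht.le
    have hxp : (0:ℝ) < (1+X)^t := Real.rpow_pos_of_pos hx t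
    have hdp : (0:ℝ) < (1+D)^t := Real.rpow_pos_of_pos hd t
    rw [Real.rpow_neg hx.le, Real.rpow_neg hd.le, inv_eq_one_div, inv_eq_one_div,
      ← mul_div_assoc, mul_one, div_le_div_iff₀ hxp hdp, one_mul]
    linarith
  have hsum_nonneg : (0:ℝ) ≤ (4:ℝ) ^ t * (1+D) ^ (-t) := by positivity
  rcases le_total A B with hAB | hAB
  · -- A ≤ B : bound by the (1+A)^(-c) term
    have hle : 1 + D ≤ 4 * (1 + B) := by linarith
    have key : 1 / ((1+A) ^ (1-α) * (1+B)) ≤ (4:ℝ)^t * (1+D)^(-t) * (1+A)^(-c) := by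
      have e1 : 1 / ((1+A) ^ (1-α) * (1+B)) = (1+A)^(-(1-α)) * (1+B)^(-t) * (1+B)^(-(1-t)) := by
        rw [mul_assoc, ← Real.rpow_add hb, show -t + -(1-t) = (-1:ℝ) by ring,
          Real.rpow_neg_one, Real.rpow_neg ha.le, one_div, mul_inv]
      rw [e1]
      have e2 : (1+B)^(-(1-t)) ≤ (1+A)^(-(1-t)) := by
        apply rpow_anti ha (by linarith)
        rw [ht_def]; linarith
      have e3 : (1+B)^(-t) ≤ (4:ℝ)^t * (1+D)^(-t) := step B hb hle
      calc (1+A)^(-(1-α)) * (1+B)^(-t) * (1+B)^(-(1-t))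
          ≤ (1+A)^(-(1-α)) * ((4:ℝ)^t * (1+D)^(-t)) * (1+A)^(-(1-t)) := by
            apply mul_le_mul
            · exact mul_le_mul_of_nonneg_left e3 (Real.rpow_nonneg ha.le _)
            · exact e2
            · positivity
            · positivity
        _ = (4:ℝ)^t * (1+D)^(-t) * ((1+A)^(-(1-α)) * (1+A)^(-(1-t))) := by ring
        _ = (4:ℝ)^t * (1+D)^(-t) * (1+A)^(-c) := by
            rw [← Real.rpow_add ha]
            congr 1
            rw [hc_def, ht_def]; ring_nf
    calc 1 / ((1+A) ^ (1-α) * (1+B)) ≤ (4:ℝ)^t * (1+D)^(-t) * (1+A)^(-c) := key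
      _ ≤ (4:ℝ)^t * (1+D)^(-t) * ((1+A)^(-c) + (1+B)^(-c)) := by
          apply mul_le_mul_of_nonneg_left _ hsum_nonneg
          have : (0:ℝ) ≤ (1+B)^(-c) := Real.rpow_nonneg hb.le _
          linarith
  · -- B ≤ A : bound by the (1+B)^(-c) term
    have hle : 1 + D ≤ 4 * (1 + A) := by linarith
    have key : 1 / ((1+A) ^ (1-α) * (1+B)) ≤ (4:ℝ)^t * (1+D)^(-t) * (1+B)^(-c) := by
      have e1 : 1 / ((1+A) ^ (1-α) * (1+B)) = (1+A)^(-t) * (1+A)^(-t) * (1+B)^(-(1:ℝ)) := by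
        rw [← Real.rpow_add ha]
        have : -t + -t = -(1-α) := by rw [ht_def]; ring
        rw [this, Real.rpow_neg ha.le, Real.rpow_neg_one]
        field_simp
      rw [e1]
      have e2 : (1+A)^(-t) ≤ (1+B)^(-t) := rpow_anti hb (by linarith) ht.le
      have e3 : (1+A)^(-t) ≤ (4:ℝ)^t * (1+D)^(-t) := step A ha hle
      calc (1+A)^(-t) * (1+A)^(-t) * (1+B)^(-(1:ℝ))
          ≤ ((4:ℝ)^t * (1+D)^(-t)) * (1+B)^(-t) * (1+B)^(-(1:ℝ)) := by
            apply mul_le_mul_of_nonneg_right _ (Real.rpow_nonneg hb.le _)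
            apply mul_le_mul e3 e2 (Real.rpow_nonneg ha.le _) (by positivity)
        _ = (4:ℝ)^t * (1+D)^(-t) * ((1+B)^(-t) * (1+B)^(-(1:ℝ))) := by ring
        _ = (4:ℝ)^t * (1+D)^(-t) * (1+B)^(-c) := by
            rw [← Real.rpow_add hb]
            congr 1
            rw [hc_def, ht_def]; ring_nf
    calc 1 / ((1+A) ^ (1-α) * (1+B)) ≤ (4:ℝ)^t * (1+D)^(-t) * (1+B)^(-c) := key
      _ ≤ (4:ℝ)^t * (1+D)^(-t) * ((1+A)^(-c) + (1+B)^(-c)) := by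
          apply mul_le_mul_of_nonneg_left _ hsum_nonneg
          have : (0:ℝ) ≤ (1+A)^(-c) := Real.rpow_nonneg ha.le _
          linarith

theorem stmt1 (α : ℝ) (h1 : 0 < α) (h2 : α < 1) :
    ∃ C : ℝ, 0 < C ∧ ∀ p κ : ℝ × ℝ,
      (∫ q : ℝ × ℝ, 1 / ((1 + nsq (p - q)) ^ (1 - α) * (1 + nsq (q + κ)))) ≤
        C / (1 + nsq (p + κ)) ^ ((1 - α) / 2) := by
  set t : ℝ := (1-α)/2 with ht_def
  set c : ℝ := (3-α)/2 with hc_def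
  have hc : 1 < c := by rw [hc_def]; linarith
  set J : ℝ := ∫ q : ℝ × ℝ, (1 + nsq q) ^ (-c) with hJ_def
  have hJ0 : 0 ≤ J := by
    apply integral_nonneg
    intro q
    exact Real.rpow_nonneg (by have := nsq_nonneg q; positivity) _
  refine ⟨(4:ℝ)^t * (2*J) + 1, by positivity, fun p κ => ?_⟩
  have hdpos : (0:ℝ) < 1 + nsq (p + κ) := by have := nsq_nonneg (p+κ); positivity
  have hdt : (0:ℝ) < (1 + nsq (p + κ)) ^ t := Real.rpow_pos_of_pos hdpos t
  -- integrable majorants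
  have hint1 : Integrable (fun q : ℝ × ℝ => (1 + nsq (p - q)) ^ (-c)) := by
    have : (fun q : ℝ × ℝ => (1 + nsq (p - q)) ^ (-c)) =
        (fun q : ℝ × ℝ => (1 + nsq (q - p)) ^ (-c)) := by
      funext q
      rw [show p - q = -(q - p) by ring, nsq_neg]
    rw [this]
    exact (integrable_base hc).comp_sub_right p
  have hint2 : Integrable (fun q : ℝ × ℝ => (1 + nsq (q + κ)) ^ (-c)) :=
    (integrable_base hc).comp_add_right κ
  have hIfull : Integrable (fun q : ℝ × ℝ =>
      (4:ℝ)^t * (1 + nsq (p+κ))^(-t) *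
        ((1 + nsq (p - q)) ^ (-c) + (1 + nsq (q + κ)) ^ (-c))) :=
    (hint1.add hint2).const_mul _
  have hmono : (∫ q : ℝ × ℝ, 1 / ((1 + nsq (p - q)) ^ (1 - α) * (1 + nsq (q + κ)))) ≤
      ∫ q : ℝ × ℝ, (4:ℝ)^t * (1 + nsq (p+κ))^(-t) *
        ((1 + nsq (p - q)) ^ (-c) + (1 + nsq (q + κ)) ^ (-c)) := by
    apply integral_mono_of_nonneg
    · apply Filter.Eventually.of_forall
      intro q
      have h1' := nsq_nonneg (p - q)
      have h2' := nsq_nonneg (q + κ)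
      positivity
    · exact hIfull
    · apply Filter.Eventually.of_forall
      intro q
      have hle : nsq (p + κ) ≤ 2 * nsq (p - q) + 2 * nsq (q + κ) := by
        have := nsq_add_le (p - q) (q + κ)
        rw [show p - q + (q + κ) = p + κ by ring] at this
        exact this
      exact pointwise α h1 h2 (nsq_nonneg _) (nsq_nonneg _) (nsq_nonneg _) hle
  have hcalc : (∫ q : ℝ × ℝ, (4:ℝ)^t * (1 + nsq (p+κ))^(-t) *
        ((1 + nsq (p - q)) ^ (-c) + (1 + nsq (q + κ)) ^ (-c))) =
      (4:ℝ)^t * (1 + nsq (p+κ))^(-t) * (2*J) := by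
    rw [integral_const_mul]
    congr 1
    rw [integral_add hint1 hint2]
    have e1 : (∫ q : ℝ × ℝ, (1 + nsq (p - q)) ^ (-c)) = J := by
      have : (fun q : ℝ × ℝ => (1 + nsq (p - q)) ^ (-c)) =
          (fun q : ℝ × ℝ => (1 + nsq (q - p)) ^ (-c)) := by
        funext q
        rw [show p - q = -(q - p) by ring, nsq_neg]
      rw [this, hJ_def]
      exact integral_sub_right_eq_self (fun q : ℝ × ℝ => (1 + nsq q) ^ (-c)) p
    have e2 : (∫ q : ℝ × ℝ, (1 + nsq (q + κ)) ^ (-c)) = J := by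
      rw [hJ_def]
      exact integral_add_right_eq_self (fun q : ℝ × ℝ => (1 + nsq q) ^ (-c)) κ
    rw [e1, e2]; ring
  rw [hcalc] at hmono
  calc (∫ q : ℝ × ℝ, 1 / ((1 + nsq (p - q)) ^ (1 - α) * (1 + nsq (q + κ))))
      ≤ (4:ℝ)^t * (1 + nsq (p+κ))^(-t) * (2*J) := hmono
    _ = ((4:ℝ)^t * (2*J)) / (1 + nsq (p+κ))^t := by
        rw [Real.rpow_neg hdpos.le]
        field_simp
    _ ≤ ((4:ℝ)^t * (2*J) + 1) / (1 + nsq (p+κ))^t := by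
        exact (div_le_div_iff_of_pos_right hdt).2 (by linarith)
end

section
/- Let p ∈ ℤ², τ ∈ ℝ, and for n ∈ ℤ² and i ∈ ℕ define S = {m ∈ ℤ² : 2^{i-1} ≤ |m| ≤ 2^{i+1} and |p-n-m|² + |n|² - |m|² = -τ}. Then #S ≤ C·2^i for a universal constant C. -/
/-- squared Euclidean norm on ℤ² -/
def zsq (m : ℤ × ℤ) : ℤ := m.1^2 + m.2^2

theorem stmt5 :
    ∃ C : ℕ, 0 < C ∧ ∀ (p n : ℤ × ℤ) (τ : ℝ) (i : ℕ), p ≠ n →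
      ({m : ℤ × ℤ | (2:ℝ)^i / 2 ≤ Real.sqrt ((zsq m : ℝ)) ∧
          Real.sqrt ((zsq m : ℝ)) ≤ (2:ℝ)^(i+1) ∧
          ((zsq (p - n - m) + zsq n - zsq m : ℤ) : ℝ) = -τ}).ncard ≤ C * 2^i := by
  refine ⟨5, by norm_num, ?_⟩
  intro p n τ i hpn
  set q : ℤ × ℤ := p - n with hq
  have hq0 : q ≠ 0 := sub_ne_zero.mpr hpn
  set B : ℤ := 2 ^ (i + 1) with hB
  set S : Set (ℤ × ℤ) := {m : ℤ × ℤ | (2:ℝ)^i / 2 ≤ Real.sqrt ((zsq m : ℝ)) ∧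
          Real.sqrt ((zsq m : ℝ)) ≤ (2:ℝ)^(i+1) ∧
          ((zsq (p - n - m) + zsq n - zsq m : ℤ) : ℝ) = -τ} with hSdef
  -- bounds on coordinates
  have hbound : ∀ m ∈ S, -B ≤ m.1 ∧ m.1 ≤ B ∧ -B ≤ m.2 ∧ m.2 ≤ B := by
    intro m hm
    obtain ⟨-, h2, -⟩ := hm
    have hz : (0:ℝ) ≤ (zsq m : ℝ) := by
      have : (0:ℤ) ≤ zsq m := by unfold zsq; positivity
      exact_mod_cast this
    have hsq : (zsq m : ℝ) ≤ ((2:ℝ)^(i+1))^2 := by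
      nlinarith [Real.sq_sqrt hz, Real.sqrt_nonneg ((zsq m : ℝ))]
    have hint : zsq m ≤ B ^ 2 := by
      have : ((zsq m : ℤ) : ℝ) ≤ ((B^2 : ℤ) : ℝ) := by push_cast [hB]; convert hsq using 2
      exact_mod_cast this
    have h1 : m.1 ^ 2 ≤ B ^ 2 := by unfold zsq at hint; nlinarith [sq_nonneg m.2]
    have h2' : m.2 ^ 2 ≤ B ^ 2 := by unfold zsq at hint; nlinarith [sq_nonneg m.1]
    have hBpos : (0:ℤ) < B := by positivity
    constructor
    · nlinarith
    refine ⟨by nlinarith, by nlinarith, by nlinarith⟩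
  -- constant dot product
  have hdot : ∀ m ∈ S, ∀ m' ∈ S,
      q.1 * m.1 + q.2 * m.2 = q.1 * m'.1 + q.2 * m'.2 := by
    intro m hm m' hm'
    obtain ⟨-, -, h3⟩ := hm
    obtain ⟨-, -, h3'⟩ := hm'
    have : (zsq (p - n - m) + zsq n - zsq m : ℤ) = zsq (p - n - m') + zsq n - zsq m' := by
      exact_mod_cast h3.trans h3'.symm
    have hq1 : (p - n - m).1 = q.1 - m.1 := rfl
    have hq2 : (p - n - m).2 = q.2 - m.2 := rfl
    have hq1' : (p - n - m').1 = q.1 - m'.1 := rfl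
    have hq2' : (p - n - m').2 = q.2 - m'.2 := rfl
    unfold zsq at this
    rw [hq1, hq2, hq1', hq2'] at this
    nlinarith [this]
  -- counting principle
  have hcount : ∀ f : ℤ × ℤ → ℤ, Set.InjOn f S →
      (∀ m ∈ S, f m ∈ Finset.Icc (-B) B) → S.ncard ≤ (Finset.Icc (-B) B).card := by
    intro f hinj hmem
    calc S.ncard = (f '' S).ncard := (Set.ncard_image_of_injOn hinj).symm
      _ ≤ (↑(Finset.Icc (-B) B) : Set ℤ).ncard := by
          refine Set.ncard_le_ncard ?_ (Finset.finite_toSet _)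
          rintro x ⟨m, hm, rfl⟩
          exact hmem m hm
      _ = (Finset.Icc (-B) B).card := Set.ncard_coe_finset _
  have hcard : (Finset.Icc (-B) B).card ≤ 5 * 2 ^ i := by
    rw [Int.card_Icc]
    have h1 : B + 1 - (-B) = (2 ^ (i + 2) + 1 : ℤ) := by rw [hB]; ring
    rw [h1]
    have hc : ((2:ℤ) ^ (i + 2) + 1) = ((2 ^ (i + 2) + 1 : ℕ) : ℤ) := by push_cast; ring
    rw [hc, Int.toNat_natCast]
    have : (1:ℕ) ≤ 2 ^ i := Nat.one_le_two_pow
    calc 2 ^ (i + 2) + 1 = 4 * 2 ^ i + 1 := by ring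
      _ ≤ 5 * 2 ^ i := by omega
  rcases eq_or_ne q.2 0 with h2 | h2
  · -- q.1 ≠ 0, use second coordinate
    have hq1 : q.1 ≠ 0 := by
      intro h1
      exact hq0 (Prod.ext h1 h2)
    refine le_trans (hcount Prod.snd ?_ ?_) hcard
    · intro m hm m' hm' hff
      have := hdot m hm m' hm'
      rw [h2] at this
      have : m.1 = m'.1 := by
        have := mul_left_cancel₀ hq1 (by linarith : q.1 * m.1 = q.1 * m'.1)
        exact this
      exact Prod.ext this hff
    · intro m hm
      obtain ⟨-, -, h3, h4⟩ := hbound m hm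
      exact Finset.mem_Icc.mpr ⟨h3, h4⟩
  · -- q.2 ≠ 0, use first coordinate
    refine le_trans (hcount Prod.fst ?_ ?_) hcard
    · intro m hm m' hm' hff
      have hd := hdot m hm m' hm'
      rw [hff] at hd
      have : m.2 = m'.2 := mul_left_cancel₀ h2 (by linarith)
      exact Prod.ext hff this
    · intro m hm
      obtain ⟨h1, h2', -, -⟩ := hbound m hm
      exact Finset.mem_Icc.mpr ⟨h1, h2'⟩
end

section
/- For every ε > 0, the double sum over z ∈ ℤ² and m ∈ ℤ², restricted by the constraint |p-z|² + |z-m|² - |m|² + τ = 0 (for fixed p ∈ ℤ², τ ∈ ℝ), of 1/(⟨p-z⟩^{2+ε} ⟨m⟩^{2-ε}) is bounded by a constant depending only on ε, uniformly in p and τ. Here ⟨n⟩ = (1+|n|²)^{1/2}. -/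
/-- Japanese bracket `⟨n⟩ = (1+|n|²)^{1/2}` on ℤ² -/
noncomputable def jap (n : ℤ × ℤ) : ℝ := Real.sqrt (1 + (zsq n : ℝ))

def zdot (a m : ℤ × ℤ) : ℤ := a.1 * m.1 + a.2 * m.2

lemma zdot_sub (a m n : ℤ × ℤ) : zdot a (m - n) = zdot a m - zdot a n := by
  simp only [zdot, Prod.fst_sub, Prod.snd_sub]; ring

lemma zsq_nonneg (m : ℤ × ℤ) : 0 ≤ zsq m := by unfold zsq; positivity

lemma one_le_zsq {w : ℤ × ℤ} (hw : w ≠ 0) : 1 ≤ zsq w := by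
  obtain ⟨a, b⟩ := w
  rw [Ne, Prod.mk_eq_zero, not_and_or] at hw
  unfold zsq
  rcases hw with h | h
  · have : 0 < a ^ 2 := by positivity
    nlinarith [sq_nonneg b]
  · have : 0 < b ^ 2 := by positivity
    nlinarith [sq_nonneg a]

lemma zsq_add_smul (m w : ℤ × ℤ) (k : ℤ) :
    zsq (m + k • w) = zsq m + 2 * k * zdot m w + k ^ 2 * zsq w := by
  simp only [zsq, zdot, Prod.fst_add, Prod.snd_add, Prod.smul_fst, Prod.smul_snd, smul_eq_mul]
  ring

lemma zsq_sub_sub_zsq (z m : ℤ × ℤ) : zsq (z - m) - zsq m = zsq z - zdot (2 • z) m := by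
  simp only [zsq, zdot, Prod.fst_sub, Prod.snd_sub, Prod.smul_fst, Prod.smul_snd]
  ring

lemma exists_generator_of_zdot_eq_zero {a : ℤ × ℤ} (ha : a ≠ 0) :
    ∃ w : ℤ × ℤ, w ≠ 0 ∧ ∀ u : ℤ × ℤ, zdot a u = 0 ↔ ∃ k : ℤ, u = k • w := by
  obtain ⟨a₁, a₂⟩ := a
  rw [Ne, Prod.mk_eq_zero, not_and_or] at ha
  obtain ⟨g, a', b', hg, hcop, rfl, rfl⟩ := Int.exists_gcd_one' (Int.gcd_pos_iff.mpr ha)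
  obtain ⟨s, t, hst⟩ := Int.isCoprime_iff_gcd_eq_one.mpr hcop
  refine ⟨(-b', a'), fun h => ?_, fun u => ⟨fun hu => ?_, ?_⟩⟩
  · simp only [Prod.mk_eq_zero, neg_eq_zero] at h
    simp [h.1, h.2] at hcop
  · have he : a' * u.1 + b' * u.2 = 0 := by
      have : (g : ℤ) * (a' * u.1 + b' * u.2) = 0 := by
        rw [← hu, zdot]; ring
      exact (mul_eq_zero.mp this).resolve_left (by exact_mod_cast hg.ne')
    refine ⟨s * u.2 - t * u.1, Prod.ext ?_ ?_⟩
    · simp only [Prod.smul_fst, smul_eq_mul]; linear_combination s * he - u.1 * hst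
    · simp only [Prod.smul_snd, smul_eq_mul]; linear_combination t * he - u.2 * hst
  · rintro ⟨k, rfl⟩
    simp only [zdot, Prod.smul_fst, Prod.smul_snd, smul_eq_mul]
    ring

lemma exists_zsq_add_smul_le (m w : ℤ × ℤ) :
    ∃ k₀ : ℤ, ∀ k : ℤ, zsq (m + k₀ • w) ≤ zsq (m + k • w) := by
  refine ⟨Function.argmin fun k : ℤ => (zsq (m + k • w)).toNat, fun k => ?_⟩
  have := Function.argmin_le (fun k : ℤ => (zsq (m + k • w)).toNat) k
  have := zsq_nonneg (m + k • w)
  omega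

lemma one_add_zsq_add_smul_le (m w : ℤ × ℤ) (k : ℤ) :
    1 + zsq (m + k • w) ≤ 2 * (1 + 2 * zsq m + 2 * zsq w) * (2 * k + 1) ^ 2 := by
  have hk : 1 + k ^ 2 ≤ 2 * (2 * k + 1) ^ 2 := by
    rcases le_or_gt 0 k with h | h <;> nlinarith
  have hcross := zsq_nonneg (m + (-k) • w)
  rw [zsq_add_smul] at hcross ⊢
  have := zsq_nonneg m
  have := zsq_nonneg w
  nlinarith [mul_le_mul_of_nonneg_left hk (by linarith : 0 ≤ 1 + 2 * zsq m + 2 * zsq w),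
    mul_nonneg (sq_nonneg k) (zsq_nonneg w)]

lemma sq_jap (m : ℤ × ℤ) : jap m ^ 2 = 1 + (zsq m : ℝ) :=
  Real.sq_sqrt (by have := zsq_nonneg m; positivity)

lemma one_le_jap (m : ℤ × ℤ) : 1 ≤ jap m :=
  Real.one_le_sqrt.mpr (le_add_of_nonneg_right (by exact_mod_cast zsq_nonneg m))

lemma jap_pos (m : ℤ × ℤ) : 0 < jap m := one_pos.trans_le (one_le_jap m)

lemma one_div_rpow_le_of_le_mul {x y c r : ℝ} (hx : 0 < x) (hc : 0 < c) (hr : 0 ≤ r)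
    (h : x ≤ c * y) : 1 / y ^ r ≤ c ^ r * (1 / x ^ r) := by
  have hy : 0 < y := pos_of_mul_pos_right (hx.trans_le h) hc.le
  rw [mul_one_div, div_le_div_iff₀ (Real.rpow_pos_of_pos hy r) (Real.rpow_pos_of_pos hx r),
    one_mul, ← Real.mul_rpow hc.le hy.le]
  exact Real.rpow_le_rpow hx.le h hr

/-- `|k + 1/2|` serves as the one-dimensional bracket `⟨k⟩`: it is comparable to it, never
vanishes on `ℤ`, and `Real.summable_one_div_int_add_rpow` describes its summability. -/
lemma abs_intCast_add_half_pos (k : ℤ) : 0 < |(k : ℝ) + 1 / 2| := by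
  refine abs_pos.mpr fun h => ?_
  have : (2 * k + 1 : ℤ) = 0 := by exact_mod_cast (by linarith : (2 * k + 1 : ℝ) = 0)
  omega

lemma jap_add_smul_le (m w : ℤ × ℤ) (k : ℤ) :
    jap (m + k • w) ≤ √(8 * (1 + 2 * zsq m + 2 * zsq w) : ℝ) * |(k : ℝ) + 1 / 2| := by
  have : (1 + zsq (m + k • w) : ℝ) ≤ 2 * (1 + 2 * zsq m + 2 * zsq w) * (2 * k + 1) ^ 2 := by
    exact_mod_cast one_add_zsq_add_smul_le m w k
  have := zsq_nonneg m
  have := zsq_nonneg w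
  rw [jap, ← Real.sqrt_sq_eq_abs, ← Real.sqrt_mul (by positivity)]
  exact Real.sqrt_le_sqrt (by nlinarith)

section MinimalPoint

variable {m w : ℤ × ℤ}

lemma sq_two_mul_add_one_le (hw : w ≠ 0) (hmin : ∀ k : ℤ, zsq m ≤ zsq (m + k • w)) (k : ℤ) :
    (2 * k + 1) ^ 2 ≤ 16 * (1 + zsq (m + k • w)) := by
  have hp := hmin 1
  have hn := hmin (-1)
  rw [zsq_add_smul] at hp hn ⊢
  have hW := one_le_zsq hw
  have hA := zsq_nonneg m
  rcases le_or_gt 0 k with hk | hk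
  · have : 0 ≤ k ^ 2 - k := by nlinarith
    nlinarith [mul_nonneg hk (by linarith : 0 ≤ 2 * zdot m w + zsq w),
      mul_nonneg this (by linarith : 0 ≤ zsq w - 1)]
  · have : 0 ≤ k ^ 2 + k := by nlinarith
    nlinarith [mul_nonneg (by linarith : 0 ≤ -k) (by linarith : 0 ≤ zsq w - 2 * zdot m w),
      mul_nonneg this (by linarith : 0 ≤ zsq w - 1)]

lemma abs_add_half_le_two_mul_jap (hw : w ≠ 0) (hmin : ∀ k : ℤ, zsq m ≤ zsq (m + k • w))
    (k : ℤ) : |(k : ℝ) + 1 / 2| ≤ 2 * jap (m + k • w) := by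
  refine abs_le_of_sq_le_sq ?_ (by linarith [jap_pos (m + k • w)])
  have : ((2 * k + 1) ^ 2 : ℝ) ≤ 16 * (1 + zsq (m + k • w)) := by
    exact_mod_cast sq_two_mul_add_one_le hw hmin k
  rw [mul_pow, sq_jap]
  nlinarith

lemma tsum_one_div_jap_add_smul_rpow_le (hw : w ≠ 0) (hmin : ∀ k : ℤ, zsq m ≤ zsq (m + k • w))
    (r : ℝ) : ∑' k : ℤ, 1 / jap (m + k • w) ^ r ≤ 2 ^ r * ∑' k : ℤ, 1 / |(k : ℝ) + 1 / 2| ^ r := by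
  have hnonneg : ∀ (x : ℝ) (s : ℝ), 0 ≤ x → 0 ≤ 1 / x ^ s := fun x s hx => by positivity
  rcases le_or_gt r 1 with hr | hr
  · -- For `r ≤ 1` the line sum diverges, so its `tsum` is `0`.
    rw [tsum_eq_zero_of_not_summable]
    · exact mul_nonneg (by positivity) (tsum_nonneg fun k => hnonneg _ _ (abs_nonneg _))
    intro hsum
    have hc : 0 < √(8 * (1 + 2 * zsq m + 2 * zsq w) : ℝ) :=
      Real.sqrt_pos.mpr (by have := zsq_nonneg m; have := zsq_nonneg w; positivity)
    have h₁ : Summable fun k : ℤ => 1 / jap (m + k • w) ^ (1 : ℝ) :=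
      hsum.of_nonneg_of_le (fun k => hnonneg _ _ (jap_pos _).le) fun k =>
        one_div_le_one_div_of_le (Real.rpow_pos_of_pos (jap_pos _) r)
          (Real.rpow_le_rpow_of_exponent_le (one_le_jap _) hr)
    have h₂ : Summable fun k : ℤ => 1 / |(k : ℝ) + 1 / 2| ^ (1 : ℝ) :=
      (h₁.mul_left _).of_nonneg_of_le (fun k => hnonneg _ _ (abs_nonneg _)) fun k =>
        one_div_rpow_le_of_le_mul (jap_pos _) hc zero_le_one (jap_add_smul_le m w k)
    exact lt_irrefl _ ((Real.summable_one_div_int_add_rpow _ _).mp h₂)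
  · have hle : ∀ k : ℤ, 1 / jap (m + k • w) ^ r ≤ 2 ^ r * (1 / |(k : ℝ) + 1 / 2| ^ r) :=
      fun k => one_div_rpow_le_of_le_mul (abs_intCast_add_half_pos k) two_pos (by linarith)
        (abs_add_half_le_two_mul_jap hw hmin k)
    have hmaj := ((Real.summable_one_div_int_add_rpow (1 / 2) r).mpr hr).mul_left (2 ^ r)
    rw [← tsum_mul_left]
    exact (hmaj.of_nonneg_of_le (fun k => hnonneg _ _ (jap_pos _).le) hle).tsum_le_tsum hle hmaj

end MinimalPoint

lemma summable_one_div_jap_rpow {s : ℝ} (hs : 2 < s) :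
    Summable fun m : ℤ × ℤ => 1 / jap m ^ s := by
  have h₁ := (Real.summable_one_div_int_add_rpow (1 / 2) (s / 2)).mpr (by linarith)
  have hprod := (h₁.mul_of_nonneg h₁ (fun k => by positivity) fun k => by positivity).mul_left
    (2 ^ (s / 2))
  refine hprod.of_nonneg_of_le (fun m => by have := jap_pos m; positivity) fun m => ?_
  have key : |(m.1 : ℝ) + 1 / 2| * |(m.2 : ℝ) + 1 / 2| ≤ 2 * jap m ^ 2 := by
    rw [← abs_mul]
    refine abs_le_of_sq_le_sq ?_ (by positivity)
    have hx : ((m.1 : ℝ) + 1 / 2) ^ 2 ≤ 2 * (1 + (m.1 : ℝ) ^ 2) := by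
      nlinarith [sq_nonneg ((m.1 : ℝ) - 1 / 2)]
    have hy : ((m.2 : ℝ) + 1 / 2) ^ 2 ≤ 2 * (1 + (m.2 : ℝ) ^ 2) := by
      nlinarith [sq_nonneg ((m.2 : ℝ) - 1 / 2)]
    rw [mul_pow, mul_pow, sq_jap, zsq]
    push_cast
    nlinarith [mul_le_mul hx hy (sq_nonneg _) (by positivity), sq_nonneg (m.1 : ℝ),
      sq_nonneg (m.2 : ℝ), mul_nonneg (sq_nonneg (m.1 : ℝ)) (sq_nonneg (m.2 : ℝ))]
  have hsq : jap m ^ s = (jap m ^ 2) ^ (s / 2) := by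
    rw [← Real.rpow_natCast, ← Real.rpow_mul (jap_pos m).le]
    congr 1
    ring
  rw [hsq, one_div_mul_one_div, ← Real.mul_rpow (abs_nonneg _) (abs_nonneg _)]
  exact one_div_rpow_le_of_le_mul (mul_pos (abs_intCast_add_half_pos _)
    (abs_intCast_add_half_pos _)) two_pos (by linarith) key

/-- The second summand accounts for the degenerate "line" `0·m = 0`, which is all of `ℤ²`. -/
noncomputable def lineBound (r : ℝ) : ℝ :=
  2 ^ r * ∑' k : ℤ, 1 / |(k : ℝ) + 1 / 2| ^ r + ∑' m : ℤ × ℤ, 1 / jap m ^ r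

lemma lineBound_nonneg (r : ℝ) : 0 ≤ lineBound r :=
  add_nonneg (mul_nonneg (by positivity) (tsum_nonneg fun k => by positivity))
    (tsum_nonneg fun m => by have := jap_pos m; positivity)

lemma tsum_ite_zdot_eq_le (r : ℝ) (a : ℤ × ℤ) (c : ℝ) :
    ∑' m : ℤ × ℤ, (if (zdot a m : ℝ) = c then 1 / jap m ^ r else 0) ≤ lineBound r := by
  by_cases hne : ∃ m₀, (zdot a m₀ : ℝ) = c
  swap
  · simp only [not_exists] at hne
    simp only [hne, if_false, tsum_zero]
    exact lineBound_nonneg r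
  obtain ⟨m₀, hm₀⟩ := hne
  have hS₁ : 0 ≤ 2 ^ r * ∑' k : ℤ, 1 / |(k : ℝ) + 1 / 2| ^ r :=
    mul_nonneg (by positivity) (tsum_nonneg fun k => by positivity)
  by_cases ha : a = 0
  · have hall : ∀ m, (zdot a m : ℝ) = c := fun m => by
      rw [← hm₀, ha]; simp [zdot]
    simp only [hall, if_true, lineBound]
    linarith
  obtain ⟨w, hw, hker⟩ := exists_generator_of_zdot_eq_zero ha
  obtain ⟨k₀, hk₀⟩ := exists_zsq_add_smul_le m₀ w
  set m' := m₀ + k₀ • w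
  have hmin : ∀ k : ℤ, zsq m' ≤ zsq (m' + k • w) := fun k => by
    rw [add_assoc, ← add_smul]; exact hk₀ _
  have hline : ∀ m, (zdot a m : ℝ) = c ↔ ∃ k : ℤ, m' + k • w = m := fun m => by
    have hm' : zdot a m' = zdot a m₀ := by
      rw [← sub_eq_zero, ← zdot_sub, (hker _).mpr ⟨k₀, add_sub_cancel_left m₀ _⟩]
    rw [← hm₀, ← hm', Int.cast_inj, ← sub_eq_zero, ← zdot_sub, hker]
    exact exists_congr fun k => by rw [eq_comm, eq_sub_iff_add_eq']
  have hinj : Function.Injective fun k : ℤ => m' + k • w :=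
    (add_right_injective m').comp (smul_left_injective ℤ hw)
  have hsupp : Function.support (fun m => if (zdot a m : ℝ) = c then 1 / jap m ^ r else 0) ⊆
      Set.range fun k : ℤ => m' + k • w := fun m hm => by
    by_contra h
    exact hm (if_neg fun hc => h ((hline m).mp hc))
  rw [← hinj.tsum_eq hsupp]
  simp only [(hline _).mpr ⟨_, rfl⟩, if_true]
  have := tsum_one_div_jap_add_smul_rpow_le hw hmin r
  have : 0 ≤ ∑' m : ℤ × ℤ, 1 / jap m ^ r :=
    tsum_nonneg fun m => by have := jap_pos m; positivity
  unfold lineBound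
  linarith

open scoped Classical in
lemma tsum_ite_constraint_le (s r τ : ℝ) (p z : ℤ × ℤ) :
    ∑' m : ℤ × ℤ, (if ((zsq (p - z) + zsq (z - m) - zsq m : ℤ) : ℝ) + τ = 0 ∧ z ≠ p then
        1 / (jap (p - z) ^ s * jap m ^ r) else 0)
      ≤ lineBound r * (1 / jap (p - z) ^ s) := by
  have hpz : 0 ≤ 1 / jap (p - z) ^ s := by have := jap_pos (p - z); positivity
  by_cases hz : z = p
  · subst hz
    simp only [ne_eq, not_true_eq_false, and_false, if_false, tsum_zero]
    exact mul_nonneg (lineBound_nonneg r) hpz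
  have hterm : ∀ m, (if ((zsq (p - z) + zsq (z - m) - zsq m : ℤ) : ℝ) + τ = 0 ∧ z ≠ p then
        1 / (jap (p - z) ^ s * jap m ^ r) else 0) = 1 / jap (p - z) ^ s *
      (if (zdot (2 • z) m : ℝ) = zsq (p - z) + zsq z + τ then 1 / jap m ^ r else 0) := fun m => by
    have hiff : ((zsq (p - z) + zsq (z - m) - zsq m : ℤ) : ℝ) + τ = 0 ↔
        (zdot (2 • z) m : ℝ) = zsq (p - z) + zsq z + τ := by
      rw [add_sub_assoc, zsq_sub_sub_zsq]
      push_cast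
      constructor <;> intro h <;> linarith
    simp only [hiff, hz, ne_eq, not_false_eq_true, and_true]
    split_ifs
    · rw [one_div_mul_one_div]
    · rw [mul_zero]
  rw [tsum_congr hterm, tsum_mul_left, mul_comm]
  exact mul_le_mul_of_nonneg_right (tsum_ite_zdot_eq_le r _ _) hpz

open scoped Classical in
theorem stmt9 (ε : ℝ) (hε : 0 < ε) :
    ∃ C : ℝ, ∀ (p : ℤ × ℤ) (τ : ℝ),
      (∑' z : ℤ × ℤ, ∑' m : ℤ × ℤ,
        if ((zsq (p - z) + zsq (z - m) - zsq m : ℤ) : ℝ) + τ = 0 ∧ z ≠ p then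
          1 / (jap (p - z) ^ (2 + ε) * jap m ^ (2 - ε))
        else 0) ≤ C := by
  refine ⟨lineBound (2 - ε) * ∑' u : ℤ × ℤ, 1 / jap u ^ (2 + ε), fun p τ => ?_⟩
  have hmaj : Summable fun z : ℤ × ℤ => lineBound (2 - ε) * (1 / jap (p - z) ^ (2 + ε)) :=
    ((Equiv.subLeft p).summable_iff.mpr (summable_one_div_jap_rpow (by linarith))).mul_left _
  have hinner := tsum_ite_constraint_le (2 + ε) (2 - ε) τ p
  calc _ ≤ ∑' z : ℤ × ℤ, lineBound (2 - ε) * (1 / jap (p - z) ^ (2 + ε)) := by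
        refine (hmaj.of_nonneg_of_le (fun z => tsum_nonneg fun m => ?_) hinner).tsum_le_tsum
          hinner hmaj
        have := jap_pos (p - z); have := jap_pos m
        split_ifs <;> positivity
    _ = _ := by
        rw [tsum_mul_left, ← (Equiv.subLeft p).tsum_eq fun u => 1 / jap u ^ (2 + ε)]
        rfl
end
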